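/- Let K be a minimal counterexample to the statement 'every 2-collapsible face of a 2-collapsible complex is good' (i.e., K is 2-collapsible, contains a bad 2-collapsible face, and no complex with fewer faces has this property). Then any two 2-collapsible faces of K are dependent: they are contained in the same unique maximal face. -/
import Mathlib


open Finset

variable {V : Type*} [DecidableEq V]

/-- An (abstract, finite) simplicial complex: a set system closed under taking subsets. -/
def IsComplex (K : Finset (Finset V)) : Prop :=
  ∀ σ ∈ K, ∀ τ ⊆ σ, τ ∈ K

/-- `τ` is the unique maximal face of `K` containing `σ`. -/
def IsTau (K : Finset (Finset V)) (σ τ : Finset V) : Prop :=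
  σ ∈ K ∧ τ ∈ K ∧ σ ⊆ τ ∧ ∀ η ∈ K, σ ⊆ η → η ⊆ τ

/-- `σ` is a `d`-collapsible face of `K`: `dim σ ≤ d - 1` (i.e. `σ.card ≤ d`) and `σ`
is contained in a unique maximal face of `K`. -/
def DCollFace (d : ℕ) (K : Finset (Finset V)) (σ : Finset V) : Prop :=
  σ.card ≤ d ∧ ∃ τ, IsTau K σ τ

/-- The result `K_σ` of the elementary collapse at `σ`: all faces containing `σ` are removed
(they all lie between `σ` and `τ(σ)`). -/
def collapseAt (K : Finset (Finset V)) (σ : Finset V) : Finset (Finset V) :=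
  K.filter (fun η => ¬ σ ⊆ η)

/-- One elementary `d`-collapse. -/
def ElemCollapse (d : ℕ) (K K' : Finset (Finset V)) : Prop :=
  ∃ σ, DCollFace d K σ ∧ K' = collapseAt K σ

/-- `K` `d`-collapses to `L`. -/
def CollapsesTo (d : ℕ) (K L : Finset (Finset V)) : Prop :=
  Relation.ReflTransGen (ElemCollapse d) K L

/-- `K` is `d`-collapsible. -/
def DCollapsible (d : ℕ) (K : Finset (Finset V)) : Prop :=
  CollapsesTo d K ∅

lemma tau_unique {K : Finset (Finset V)} {σ τ₁ τ₂ : Finset V}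
    (h1 : IsTau K σ τ₁) (h2 : IsTau K σ τ₂) : τ₁ = τ₂ :=
  subset_antisymm (h2.2.2.2 τ₁ h1.2.1 h1.2.2.1) (h1.2.2.2 τ₂ h2.2.1 h2.2.2.1)

lemma isComplex_collapseAt {K : Finset (Finset V)} (hK : IsComplex K) (σ : Finset V) :
    IsComplex (collapseAt K σ) := by
  intro η hη ρ hρ
  simp only [collapseAt, mem_filter] at *
  exact ⟨hK η hη.1 ρ hρ, fun hs => hη.2 (hs.trans hρ)⟩

lemma card_collapseAt_lt {K : Finset (Finset V)} {σ : Finset V} (hσ : σ ∈ K) :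
    (collapseAt K σ).card < K.card := by
  apply card_lt_card
  refine ⟨filter_subset _ _, fun hsub => ?_⟩
  have := hsub hσ
  simp [collapseAt] at this

lemma collapseAt_comm (K : Finset (Finset V)) (σ σ' : Finset V) :
    collapseAt (collapseAt K σ) σ' = collapseAt (collapseAt K σ') σ := by
  simp only [collapseAt, filter_filter]
  exact filter_congr (fun η _ => by tauto)

lemma isTau_collapseAt {K : Finset (Finset V)} {σ τ σ' τ' : Finset V}
    (h : IsTau K σ τ) (h' : IsTau K σ' τ') (hne : τ ≠ τ') :
    IsTau (collapseAt K σ) σ' τ' := by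
  obtain ⟨hσ, hτ, hστ, hmax⟩ := h
  obtain ⟨hσ', hτ', hστ', hmax'⟩ := h'
  have key : ∀ η ∈ K, σ' ⊆ η → ¬ σ ⊆ η := by
    intro η hη hσ'η hσh
    have hητ := hmax η hη hσh
    have hητ' := hmax' η hη hσ'η
    exact hne (subset_antisymm (hmax' τ hτ (hσ'η.trans hητ))
      (hmax τ' hτ' (hσh.trans hητ')))
  refine ⟨?_, ?_, hστ', ?_⟩
  · exact mem_filter.2 ⟨hσ', key σ' hσ' subset_rfl⟩
  · exact mem_filter.2 ⟨hτ', key τ' hτ' hστ'⟩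
  · intro η hη hσ'η
    exact hmax' η (mem_filter.1 hη).1 hσ'η

lemma dCollFace_collapseAt {K : Finset (Finset V)} {σ τ σ' τ' : Finset V}
    (h : IsTau K σ τ) (h' : IsTau K σ' τ') (hne : τ ≠ τ') (hc : σ'.card ≤ 2) :
    DCollFace 2 (collapseAt K σ) σ' :=
  ⟨hc, τ', isTau_collapseAt h h' hne⟩

/-- In a minimal counterexample to "every 2-collapsible face of a 2-collapsible complex is
good", any two 2-collapsible faces are dependent (they have the same unique maximal face). -/
theorem stmt18 (K : Finset (Finset ℕ)) (hK : IsComplex K) (hcoll : DCollapsible 2 K)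
    (hbad : ∃ σ : Finset ℕ, DCollFace 2 K σ ∧ ¬ DCollapsible 2 (collapseAt K σ))
    (hmin : ∀ K' : Finset (Finset ℕ), IsComplex K' → DCollapsible 2 K' →
      (∃ σ : Finset ℕ, DCollFace 2 K' σ ∧ ¬ DCollapsible 2 (collapseAt K' σ)) →
      K.card ≤ K'.card) :
    ∀ σ τ σ' τ' : Finset ℕ, σ.card ≤ 2 → σ'.card ≤ 2 →
      IsTau K σ τ → IsTau K σ' τ' → τ = τ' := by
  obtain ⟨b, ⟨hbcard, τb, hbτ⟩, hbbad⟩ := hbad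
  -- a "good" face always has the same maximal face as a "bad" face
  have good_bad : ∀ g τg b' τb', g.card ≤ 2 → IsTau K g τg →
      DCollapsible 2 (collapseAt K g) → b'.card ≤ 2 → IsTau K b' τb' →
      ¬ DCollapsible 2 (collapseAt K b') → τg = τb' := by
    intro g τg b' τb' hgc hgτ hggood hbc hbτ' hbbad'
    by_contra hne
    have h1 : DCollFace 2 (collapseAt K g) b' := dCollFace_collapseAt hgτ hbτ' hne hbc
    have h2 : ¬ DCollapsible 2 (collapseAt (collapseAt K g) b') := by
      rw [collapseAt_comm]
      intro hc
      exact hbbad' (Relation.ReflTransGen.head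
        ⟨g, dCollFace_collapseAt hbτ' hgτ (Ne.symm hne) hgc, rfl⟩ hc)
    have := hmin (collapseAt K g) (isComplex_collapseAt hK g) hggood ⟨b', h1, h2⟩
    exact absurd this (not_le.2 (card_collapseAt_lt hgτ.1))
  -- there is a good face, since `K` is nonempty and collapsible
  obtain ⟨g, ⟨hgcard, τg, hgτ⟩, hggood⟩ :
      ∃ g, DCollFace 2 K g ∧ DCollapsible 2 (collapseAt K g) := by
    rcases hcoll.cases_head with h | ⟨K', ⟨g, hgf, rfl⟩, hrest⟩
    · exact absurd (h ▸ hbτ.1) (notMem_empty b)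
    · exact ⟨g, hgf, hrest⟩
  -- every 2-collapsible face has maximal face `τb`
  have main : ∀ σ τ, σ.card ≤ 2 → IsTau K σ τ → τ = τb := by
    intro σ τ hc hτ
    by_cases hgood : DCollapsible 2 (collapseAt K σ)
    · exact good_bad σ τ b τb hc hτ hgood hbcard hbτ hbbad
    · have h1 := good_bad g τg σ τ hgcard hgτ hggood hc hτ hgood
      have h2 := good_bad g τg b τb hgcard hgτ hggood hbcard hbτ hbbad
      exact h1 ▸ h2
  intro σ τ σ' τ' hc hc' hτ hτ'
  rw [main σ τ hc hτ, main σ' τ' hc' hτ']
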